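/- Let H and B be Hopf algebras over a commutative ring k with antipodes 𝒮 (on H) and s (on B), and let π : H → B and i : B → H be Hopf algebra homomorphisms with π ∘ i = id_B. Define p̃ : H → H by p̃(h) = Σ h₁ · i(s(π(h₂))). Then for every h ∈ H, p̃(h) lies in the coinvariants A = { x ∈ H : Σ x₁ ⊗ π(x₂) = x ⊗ 1_B }, and p̃ restricts to the identity on A (i.e. p̃(x) = x for x ∈ A); in particular p̃ is idempotent. -/

import Mathlib

/-!
Write `j = i ∘ s ∘ π`, so that `p̃ = id ⋆ j` for the convolution product on `Hom(H, H)`, and let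
`Φ = (id ⊗ π) ∘ Δ : H → H ⊗ B`, an algebra map. Then `Φ ∘ p̃ = Φ ⋆ (Φ ∘ j)`, and `Φ = ρ ⋆ (ι ∘ π)`
with `ρ h = h ⊗ 1`, `ι b = 1 ⊗ b`. As `Φ ∘ i = (i ⊗ id) ∘ Δ` and `π` is comultiplicative,
`(ι ∘ π) ⋆ (Φ ∘ j)` is the image of `ι ⋆ (Δ ∘ s) = ρ ∘ s` in `Hom(B, B ⊗ B)`, which holds because
`ρ ∘ s` is a left and `ι ⋆ (Δ ∘ s)` a right convolution inverse of `ρ` (recall `Δ = ρ ⋆ ι` and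
`Δ ⋆ (Δ ∘ s) = 1`). Hence `Φ ∘ p̃ = ρ ⋆ (ρ ∘ j) = ρ ∘ p̃`. On a coinvariant `x`,
`p̃ x = x · i(s 1) = x`.
-/

open Coalgebra TensorProduct WithConv

namespace LinearMap

variable {R C D A A' : Type*} [CommSemiring R]

lemma convMul_comp_distrib_of_map_comp_comul [NonUnitalNonAssocSemiring A] [Module R A]
    [SMulCommClass R A A] [IsScalarTower R A A] [AddCommMonoid C] [Module R C]
    [CoalgebraStruct R C] [AddCommMonoid D] [Module R D] [CoalgebraStruct R D]
    (φ : D →ₗ[R] C) (hφ : map φ φ ∘ₗ comul = comul ∘ₗ φ) (f g : WithConv (C →ₗ[R] A)) :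
    toConv ((f * g).ofConv ∘ₗ φ) = toConv (f.ofConv ∘ₗ φ) * toConv (g.ofConv ∘ₗ φ) := by
  simp only [convMul_def, ofConv_toConv, map_comp, comp_assoc, hφ]

lemma map_comp_comul_eq_convMul [Semiring A] [Algebra R A] [Semiring A'] [Algebra R A']
    [AddCommMonoid C] [Module R C] [CoalgebraStruct R C] (f : C →ₗ[R] A) (g : C →ₗ[R] A') :
    toConv (map f g ∘ₗ comul) =
      toConv (Algebra.TensorProduct.includeLeft.toLinearMap ∘ₗ f) *
        toConv ((Algebra.TensorProduct.includeRight : A' →ₐ[R] A ⊗[R] A').toLinearMap ∘ₗ g) := by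
  have : mul' R (A ⊗[R] A') ∘ₗ map Algebra.TensorProduct.includeLeft.toLinearMap
      (Algebra.TensorProduct.includeRight : A' →ₐ[R] A ⊗[R] A').toLinearMap = .id := by
    ext; simp
  rw [convMul_def, ofConv_toConv, ofConv_toConv, map_comp, ← comp_assoc, ← comp_assoc, this,
    id_comp]

lemma map_id_comp_comul_comp_eq_map_comp_comul [AddCommMonoid C] [Module R C]
    [CoalgebraStruct R C] [AddCommMonoid D] [Module R D] [CoalgebraStruct R D]
    (π : C →ₗ[R] D) (i : D →ₗ[R] C) (hi : map i i ∘ₗ comul = comul ∘ₗ i) (hπi : π ∘ₗ i = id) :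
    map id π ∘ₗ comul ∘ₗ i = map i id ∘ₗ comul := by
  rw [← hi, ← comp_assoc, ← map_comp, id_comp, hπi]

end LinearMap

namespace HopfAlgebra

open Algebra.TensorProduct LinearMap

variable {R B : Type*} [CommSemiring R] [Semiring B] [HopfAlgebra R B]

-- In Sweedler notation: `Σ s(b₂)₁ ⊗ b₁ s(b₂)₂ = s(b) ⊗ 1`.
lemma includeRight_convMul_comul_comp_antipode :
    toConv (includeRight : B →ₐ[R] B ⊗[R] B).toLinearMap * toConv (comul ∘ₗ antipode R) =
      toConv ((includeLeft : B →ₐ[R] B ⊗[R] B).toLinearMap ∘ₗ antipode R) := by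
  have hinv : toConv ((includeLeft : B →ₐ[R] B ⊗[R] B).toLinearMap ∘ₗ antipode R) *
      toConv includeLeft.toLinearMap = 1 := by
    have := algHom_comp_convMul_distrib (includeLeft : B →ₐ[R] B ⊗[R] B)
      (toConv (antipode R)) (toConv .id)
    rw [antipode_mul_id, algHom_comp_convOne] at this
    exact WithConv.ext this.symm
  have hcomul : toConv (comul : B →ₗ[R] B ⊗[R] B) =
      toConv includeLeft.toLinearMap * toConv includeRight.toLinearMap := by
    simpa using map_comp_comul_eq_convMul (R := R) (C := B) id id
  refine (left_inv_eq_right_inv hinv ?_).symm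
  rw [← mul_assoc, ← hcomul, comul_right_inv]

lemma includeRight_convMul_map_comul_comp_antipode {A : Type*} [Semiring A] [Algebra R A]
    (i : B →ₐ[R] A) :
    toConv (includeRight : B →ₐ[R] A ⊗[R] B).toLinearMap *
        toConv ((Algebra.TensorProduct.map i (.id R B)).toLinearMap ∘ₗ comul ∘ₗ antipode R) =
      toConv ((includeLeft : A →ₐ[R] A ⊗[R] B).toLinearMap ∘ₗ i.toLinearMap ∘ₗ antipode R) := by
  set ψ := Algebra.TensorProduct.map i (.id R B)
  have hR : (includeRight : B →ₐ[R] A ⊗[R] B).toLinearMap =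
      ψ.toLinearMap ∘ₗ includeRight.toLinearMap := by
    ext; simp [ψ]
  have hL : (includeLeft : A →ₐ[R] A ⊗[R] B).toLinearMap ∘ₗ i.toLinearMap =
      ψ.toLinearMap ∘ₗ includeLeft.toLinearMap := by
    ext; simp [ψ]
  calc _ = toConv (ψ.toLinearMap ∘ₗ
          (toConv (includeRight : B →ₐ[R] B ⊗[R] B).toLinearMap *
            toConv (comul ∘ₗ antipode R)).ofConv) := by
        rw [hR]
        exact (congrArg toConv (algHom_comp_convMul_distrib ψ _ _)).symm
    _ = _ := by
        rw [includeRight_convMul_comul_comp_antipode, ofConv_toConv, ← comp_assoc, ← hL,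
          comp_assoc]

end HopfAlgebra

open TensorProduct

variable {k H B : Type*} [CommRing k] [Ring H] [HopfAlgebra k H]
  [Ring B] [HopfAlgebra k B]

/-- `p̃(h) = Σ h₁ · i(s(π(h₂)))`, where `s` is the antipode of `B`. -/
noncomputable def ptilde (π : H →ₐ[k] B) (i : B →ₐ[k] H) : H →ₗ[k] H :=
  LinearMap.mul' k H ∘ₗ
    TensorProduct.map (LinearMap.id : H →ₗ[k] H)
      (i.toLinearMap ∘ₗ HopfAlgebra.antipode (R := k) (A := B) ∘ₗ π.toLinearMap) ∘ₗ
    Coalgebra.comul (R := k) (A := H)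

open Algebra.TensorProduct LinearMap HopfAlgebra

lemma ptilde_apply_of_coinvariant (π : H →ₐ[k] B) (i : B →ₐ[k] H) {x : H}
    (hx : map LinearMap.id π.toLinearMap (comul x) = x ⊗ₜ[k] (1 : B)) : ptilde π i x = x := by
  have : ptilde π i x =
      mul' k H (map .id (i.toLinearMap ∘ₗ antipode k) (map .id π.toLinearMap (comul x))) := by
    rw [← LinearMap.comp_apply (map _ _), ← TensorProduct.map_comp]
    rfl
  simp [this, hx, antipode_one]

lemma map_comul_ptilde (π : H →ₐ[k] B) (i : B →ₐ[k] H)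
    (hπΔ : map π.toLinearMap π.toLinearMap ∘ₗ comul = comul ∘ₗ π.toLinearMap)
    (hiΔ : map i.toLinearMap i.toLinearMap ∘ₗ comul = comul ∘ₗ i.toLinearMap)
    (hπi : ∀ b : B, π (i b) = b) (h : H) :
    map LinearMap.id π.toLinearMap (comul (ptilde π i h)) = ptilde π i h ⊗ₜ[k] (1 : B) := by
  set j : H →ₗ[k] H := i.toLinearMap ∘ₗ antipode k ∘ₗ π.toLinearMap
  let Φ : H →ₐ[k] H ⊗[k] B :=
    (Algebra.TensorProduct.map (.id k H) π).comp (Bialgebra.comulAlgHom k H)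
  let ψ : B ⊗[k] B →ₐ[k] H ⊗[k] B := Algebra.TensorProduct.map i (.id k B)
  let ρ : H →ₐ[k] H ⊗[k] B := includeLeft
  have hΦj : Φ.toLinearMap ∘ₗ j = ψ.toLinearMap ∘ₗ (comul ∘ₗ antipode k) ∘ₗ π.toLinearMap :=
    congrArg (· ∘ₗ antipode k ∘ₗ π.toLinearMap)
      (map_id_comp_comul_comp_eq_map_comp_comul _ _ hiΔ (LinearMap.ext hπi))
  have hΦ : toConv Φ.toLinearMap =
      toConv ρ.toLinearMap * toConv (includeRight.toLinearMap ∘ₗ π.toLinearMap) :=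
    map_comp_comul_eq_convMul (R := k) (LinearMap.id : H →ₗ[k] H) π.toLinearMap
  suffices toConv (Φ.toLinearMap ∘ₗ ptilde π i) = toConv (ρ.toLinearMap ∘ₗ ptilde π i) from
    congr($this h)
  calc toConv (Φ.toLinearMap ∘ₗ ptilde π i)
      = toConv Φ.toLinearMap * toConv (Φ.toLinearMap ∘ₗ j) :=
        congrArg toConv (algHom_comp_convMul_distrib Φ (toConv .id) (toConv j))
    _ = toConv ρ.toLinearMap * (toConv (includeRight.toLinearMap ∘ₗ π.toLinearMap) *
          toConv (ψ.toLinearMap ∘ₗ (comul ∘ₗ antipode k) ∘ₗ π.toLinearMap)) := by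
        rw [hΦ, hΦj, mul_assoc]
    _ = toConv ρ.toLinearMap * toConv (ρ.toLinearMap ∘ₗ j) := by
        have key := congrArg (fun f ↦ toConv (ofConv f ∘ₗ π.toLinearMap))
          (includeRight_convMul_map_comul_comp_antipode i)
        rw [convMul_comp_distrib_of_map_comp_comul π.toLinearMap hπΔ] at key
        exact congrArg _ key
    _ = toConv (ρ.toLinearMap ∘ₗ ptilde π i) :=
        (congrArg toConv (algHom_comp_convMul_distrib ρ (toConv .id) (toConv j))).symm

theorem ptilde_coinvariant_retraction_general (π : H →ₐ[k] B) (i : B →ₐ[k] H)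
    (hπΔ : TensorProduct.map π.toLinearMap π.toLinearMap ∘ₗ
        Coalgebra.comul (R := k) (A := H) =
      Coalgebra.comul (R := k) (A := B) ∘ₗ π.toLinearMap)
    (hiΔ : TensorProduct.map i.toLinearMap i.toLinearMap ∘ₗ
        Coalgebra.comul (R := k) (A := B) =
      Coalgebra.comul (R := k) (A := H) ∘ₗ i.toLinearMap)
    (hπi : ∀ b : B, π (i b) = b) :
    (∀ h : H,
      TensorProduct.map (LinearMap.id : H →ₗ[k] H) π.toLinearMap
          (Coalgebra.comul (R := k) (ptilde π i h)) = ptilde π i h ⊗ₜ[k] (1 : B)) ∧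
    (∀ x : H,
      TensorProduct.map (LinearMap.id : H →ₗ[k] H) π.toLinearMap
          (Coalgebra.comul (R := k) x) = x ⊗ₜ[k] (1 : B) →
      ptilde π i x = x) ∧
    (∀ h : H, ptilde π i (ptilde π i h) = ptilde π i h) := by
  have hcoinvariant := map_comul_ptilde π i hπΔ hiΔ hπi
  exact ⟨hcoinvariant, fun _ hx ↦ ptilde_apply_of_coinvariant π i hx,
    fun h ↦ ptilde_apply_of_coinvariant π i (hcoinvariant h)⟩

/-- `p̃(h) = Σ h₁ i(s(π(h₂)))` lands in the coinvariants
`A = {x : Σ x₁ ⊗ π(x₂) = x ⊗ 1}`, restricts to the identity on `A`, and is idempotent. -/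
theorem ptilde_coinvariant_retraction (π : H →ₐ[k] B) (i : B →ₐ[k] H)
    (hπΔ : TensorProduct.map π.toLinearMap π.toLinearMap ∘ₗ
        Coalgebra.comul (R := k) (A := H) =
      Coalgebra.comul (R := k) (A := B) ∘ₗ π.toLinearMap)
    (hπε : Coalgebra.counit (R := k) (A := B) ∘ₗ π.toLinearMap =
      Coalgebra.counit (R := k) (A := H))
    (hiΔ : TensorProduct.map i.toLinearMap i.toLinearMap ∘ₗ
        Coalgebra.comul (R := k) (A := B) =
      Coalgebra.comul (R := k) (A := H) ∘ₗ i.toLinearMap)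
    (hiε : Coalgebra.counit (R := k) (A := H) ∘ₗ i.toLinearMap =
      Coalgebra.counit (R := k) (A := B))
    (hπi : ∀ b : B, π (i b) = b) :
    (∀ h : H,
      TensorProduct.map (LinearMap.id : H →ₗ[k] H) π.toLinearMap
          (Coalgebra.comul (R := k) (ptilde π i h)) = ptilde π i h ⊗ₜ[k] (1 : B)) ∧
    (∀ x : H,
      TensorProduct.map (LinearMap.id : H →ₗ[k] H) π.toLinearMap
          (Coalgebra.comul (R := k) x) = x ⊗ₜ[k] (1 : B) →
      ptilde π i x = x) ∧
    (∀ h : H, ptilde π i (ptilde π i h) = ptilde π i h) :=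
  ptilde_coinvariant_retraction_general π i hπΔ hiΔ hπi
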